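/- There exists g ∈ Aut(T) whose ⟨g⟩-orbits on the vertices of T coincide with the orbits of the full group Aut(T) on T; moreover, any two automorphisms with this property are conjugate in Aut(T). -/

import Mathlib

open Function

structure FRTree : Type 1 where
  V : Type
  [fintypeV : Fintype V]
  [decEqV : DecidableEq V]
  root : V
  parent : V → V
  parent_root : parent root = root
  reaches_root : ∀ v : V, ∃ n : ℕ, parent^[n] v = root

attribute [instance] FRTree.fintypeV FRTree.decEqV

namespace FRTree

/-- `w` is a child of `u`. -/
def IsChild (T : FRTree) (w u : T.V) : Prop := w ≠ T.root ∧ T.parent w = u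

instance (T : FRTree) (w u : T.V) : Decidable (T.IsChild w u) :=
  inferInstanceAs (Decidable (w ≠ T.root ∧ T.parent w = u))

/-- A vertex is internal if it has at least one child. -/
def Internal (T : FRTree) (u : T.V) : Prop := ∃ w, T.IsChild w u

/-- A leaf is a vertex without children. -/
def IsLeaf (T : FRTree) (u : T.V) : Prop := ¬ T.Internal u

/-- Two (non-root) vertices are siblings if they have the same parent. -/
def Siblings (T : FRTree) (u v : T.V) : Prop :=
  u ≠ T.root ∧ v ≠ T.root ∧ T.parent u = T.parent v

/-- The set of vertices of the subtree `T_u`:  `u` together with all of its descendants. -/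
def Desc (T : FRTree) (u : T.V) : Set T.V := {v | ∃ n : ℕ, T.parent^[n] v = u}

/-- First level vertices. -/
def FirstLevel (T : FRTree) (v : T.V) : Prop := v ≠ T.root ∧ T.parent v = T.root

/-- The children of a vertex, as a finset. -/
def children (T : FRTree) (u : T.V) : Finset T.V :=
  Finset.univ.filter (fun w => T.IsChild w u)

end FRTree

open FRTree

/-- Rooted tree homomorphism: sends root to root, non-root vertices to non-root
vertices and commutes with taking the parent.  (This is the same as a graph
homomorphism between the underlying trees sending root to root.) -/
def IsHom (T P : FRTree) (φ : T.V → P.V) : Prop :=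
  φ T.root = P.root ∧
  ∀ v : T.V, v ≠ T.root → φ v ≠ P.root ∧ P.parent (φ v) = φ (T.parent v)

/-- Isomorphism of rooted trees. -/
def IsIsom (T P : FRTree) (φ : T.V → P.V) : Prop :=
  IsHom T P φ ∧ Function.Bijective φ

/-- The automorphism group of a rooted tree, as a subgroup of the permutations of the vertices. -/
def FRTree.Aut (T : FRTree) : Subgroup (Equiv.Perm T.V) where
  carrier := {g : Equiv.Perm T.V | IsHom T T ⇑g}
  one_mem' := ⟨rfl, fun v hv => ⟨hv, rfl⟩⟩
  mul_mem' := by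
    rintro a b ⟨ha0, ha⟩ ⟨hb0, hb⟩
    refine ⟨?_, fun v hv => ?_⟩
    · simp only [Equiv.Perm.coe_mul, Function.comp_apply, hb0, ha0]
    · obtain ⟨hb1, hb2⟩ := hb v hv
      obtain ⟨ha1, ha2⟩ := ha (b v) hb1
      refine ⟨by simpa using ha1, ?_⟩
      simp only [Equiv.Perm.coe_mul, Function.comp_apply]
      rw [ha2, hb2]
  inv_mem' := by
    rintro a ⟨ha0, ha⟩
    refine ⟨a.injective (by simp [ha0]), fun v hv => ?_⟩
    have h1 : a⁻¹ v ≠ T.root := by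
      intro h
      apply hv
      have h2 := congrArg a h
      rwa [show ∀ y, a (a⁻¹ y) = y from Equiv.apply_symm_apply a, ha0] at h2
    obtain ⟨_, h3⟩ := ha (a⁻¹ v) h1
    rw [show ∀ y, a (a⁻¹ y) = y from Equiv.apply_symm_apply a] at h3
    exact ⟨h1, a.injective (by rw [← h3, show ∀ y, a (a⁻¹ y) = y from Equiv.apply_symm_apply a])⟩

/-- `τ` restricts to an isomorphism from the subtree `T_u` onto the subtree `T'_{u'}`.
(The values of `τ` outside of `T_u` are irrelevant.) -/
def IsSubtreeIso (T T' : FRTree) (u : T.V) (u' : T'.V) (τ : T.V → T'.V) : Prop :=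
  τ u = u' ∧ Set.BijOn τ (T.Desc u) (T'.Desc u') ∧
  ∀ w ∈ T.Desc u, w ≠ u → τ w ≠ u' ∧ T'.parent (τ w) = τ (T.parent w)

/-- A tree composition (`P`-composition of `T`): a surjective rooted tree homomorphism
satisfying the regularity condition. -/
def IsComposition (T P : FRTree) (φ : T.V → P.V) : Prop :=
  IsHom T P φ ∧ Function.Surjective φ ∧
  ∀ u v : T.V, u ≠ v → T.Internal u → T.Internal v → T.Siblings u v → φ u = φ v →
    ∃ g ∈ T.Aut, g u = v ∧ ∀ w ∈ T.Desc u, φ (g w) = φ w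
/-- Equivalence of the restrictions `φ_u : T_u → P_{φ u}` and `ψ_{u'} : T'_{u'} → P'_{ψ u'}`
of two tree compositions. -/
def RestrEquiv (T P T' P' : FRTree) (φ : T.V → P.V) (ψ : T'.V → P'.V)
    (u : T.V) (u' : T'.V) : Prop :=
  ∃ (τ : T.V → T'.V) (ω : P.V → P'.V),
    IsSubtreeIso T T' u u' τ ∧ IsSubtreeIso P P' (φ u) (ψ u') ω ∧
    ∀ w ∈ T.Desc u, ω (φ w) = ψ (τ w)

/-- Strict equivalence of the restrictions `δ_u : T_u → Q_{δ u}` and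
`δ'_{u'} : T'_{u'} → Q_{δ' u'}` of two maps into the same tree `Q`
(the isomorphism on the target side is the identity). -/
def RestrStrictEquiv (T Q T' : FRTree) (δ : T.V → Q.V) (δ' : T'.V → Q.V)
    (u : T.V) (u' : T'.V) : Prop :=
  δ u = δ' u' ∧ ∃ τ : T.V → T'.V, IsSubtreeIso T T' u u' τ ∧
    ∀ w ∈ T.Desc u, δ' (τ w) = δ w

/-- Equivalence of tree compositions. -/
def CompEquiv (T P T' P' : FRTree) (φ : T.V → P.V) (ψ : T'.V → P'.V) : Prop :=
  ∃ (τ : T.V → T'.V) (ω : P.V → P'.V),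
    IsIsom T T' τ ∧ IsIsom P P' ω ∧ ω ∘ φ = ψ ∘ τ

/-- Strict equivalence of tree compositions with the same target tree. -/
def StrictEquiv (T T' P : FRTree) (φ : T.V → P.V) (ψ : T'.V → P.V) : Prop :=
  ∃ τ : T.V → T'.V, IsIsom T T' τ ∧ ψ ∘ τ = φ

/-- `α : P → Q` is the quotient of the tree composition `φ : T → P`. -/
def IsQuotient (T P Q : FRTree) (φ : T.V → P.V) (α : P.V → Q.V) : Prop :=
  IsComposition P Q α ∧
  -- (a) for every internal `x ∈ P`, all children of `x` which are leaves are sent by `α`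
  -- to a single vertex, which is the unique child of `α x` that is a leaf
  (∀ x : P.V, P.Internal x → ∀ y y' : P.V, P.IsChild y x → P.IsLeaf y →
    P.IsChild y' x → P.IsLeaf y' → α y = α y') ∧
  (∀ x y : P.V, P.Internal x → P.IsChild y x → P.IsLeaf y →
    Q.IsChild (α y) (α x) ∧ Q.IsLeaf (α y) ∧
      ∀ z : Q.V, Q.IsChild z (α x) → Q.IsLeaf z → z = α y) ∧
  -- (b) distinct internal siblings of `Q` separate inequivalent restrictions of `φ`
  (∀ a b : Q.V, a ≠ b → Q.Internal a → Q.Internal b → Q.Siblings a b →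
    ∀ u v : T.V, α (φ u) = a → α (φ v) = b → ¬ RestrEquiv T P T P φ φ u v) ∧
  -- (c) vertices with the same image under `α ∘ φ` have equivalent restrictions of `φ`,
  -- and strictly equivalent restrictions of `α ∘ φ`
  (∀ u w : T.V, T.Internal u → T.Internal w → α (φ u) = α (φ w) →
    RestrEquiv T P T P φ φ u w ∧ RestrStrictEquiv T Q T (α ∘ φ) (α ∘ φ) u w)

/-- The type `|φ⁻¹|` of a tree composition: `|φ⁻¹|(root) = 0` and, for `y` non-root with
parent `x`, `|φ⁻¹|(y) = |φ⁻¹(y) ∩ Ch(u)|` where `u` is any vertex with `φ u = x` (for a tree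
composition this number does not depend on the choice of `u`, so it equals the `sSup` below). -/
noncomputable def typeOf (T P : FRTree) (φ : T.V → P.V) (y : P.V) : ℕ :=
  if y = P.root then 0
  else sSup {n : ℕ | ∃ u : T.V, φ u = P.parent y ∧
    n = (Finset.univ.filter (fun w => T.IsChild w u ∧ φ w = y)).card}

/-- The partition `λ^b` associated to a non-root vertex `b` of the quotient tree:
the multiset of the numbers `|φ⁻¹|(y)`, for `y` ranging over the children of `x`
with `α y = b` (where `x` is any vertex of `P` with `α x = ` parent of `b`). -/
noncomputable def assocPartition (T P Q : FRTree) (φ : T.V → P.V) (α : P.V → Q.V)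
    (x : P.V) (b : Q.V) : Multiset ℕ :=
  ((Finset.univ.filter (fun y => P.IsChild y x ∧ α y = b)).val).map (typeOf T P φ)

/-- `Λ` is the partitional labeling of the quotient tree `Q` associated to the tree
composition `φ : T → P` (with quotient map `α : P → Q`). -/
def IsAssocLabeling (T P Q : FRTree) (φ : T.V → P.V) (α : P.V → Q.V)
    (Λ : Q.V → Multiset ℕ) : Prop :=
  IsQuotient T P Q φ α ∧
  ∀ b : Q.V, b ≠ Q.root → ∀ x : P.V, α x = Q.parent b →
    Λ b = assocPartition T P Q φ α x b

/-- A partitional labeling: every non-root vertex is labeled by an integer partition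
(a multiset of positive integers). -/
def IsPartitionalLabeling (Q : FRTree) (Λ : Q.V → Multiset ℕ) : Prop :=
  ∀ a : Q.V, a ≠ Q.root → ∀ n ∈ Λ a, 0 < n

/-- Isomorphism of the restrictions of two partitional labelings to the subtrees `Q_a` and
`Q'_b`, the roots `a`, `b` being regarded as unlabeled. -/
def LabelRestrIso (Q Q' : FRTree) (Λ : Q.V → Multiset ℕ) (Ξ : Q'.V → Multiset ℕ)
    (a : Q.V) (b : Q'.V) : Prop :=
  ∃ γ : Q.V → Q'.V, IsSubtreeIso Q Q' a b γ ∧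
    ∀ c ∈ Q.Desc a, c ≠ a → Λ c = Ξ (γ c)

/-- A tree of partitions. -/
def IsTreeOfPartitions (Q : FRTree) (Λ : Q.V → Multiset ℕ) : Prop :=
  IsPartitionalLabeling Q Λ ∧
  (∀ x y y' : Q.V, Q.IsChild y x → Q.IsLeaf y → Q.IsChild y' x → Q.IsLeaf y' → y = y') ∧
  (∀ a b : Q.V, a ≠ b → Q.Internal a → Q.Internal b → Q.Siblings a b →
    ¬ LabelRestrIso Q Q Λ Λ a b)

/-- Isomorphism of partitional labelings. -/
def LabelIso (Q Q' : FRTree) (Λ : Q.V → Multiset ℕ) (Ξ : Q'.V → Multiset ℕ) : Prop :=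
  ∃ γ : Q.V → Q'.V, IsIsom Q Q' γ ∧ ∀ a : Q.V, a ≠ Q.root → Λ a = Ξ (γ a)

/-- `δ : T → Q` is a realization of the tree of partitions `(Λ, Q)` as a tree of
partitions of `T`. -/
def IsRealization (T Q : FRTree) (Λ : Q.V → Multiset ℕ) (δ : T.V → Q.V) : Prop :=
  IsComposition T Q δ ∧
  ∀ a : Q.V, Q.Internal a → ∀ u : T.V, δ u = a →
    ∑ b ∈ Q.children a, (Λ b).sum = (T.children u).card

/-- `(Λ, Q)` belongs to `Par(T)`. -/
def InParT (T Q : FRTree) (Λ : Q.V → Multiset ℕ) : Prop :=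
  IsTreeOfPartitions Q Λ ∧ ∃ δ : T.V → Q.V, IsRealization T Q Λ δ

/-- The compatibility condition on `α : P → Q` entering the definition of `Par(T, P)`:
at every vertex of `α⁻¹(a)` the numbers of children is the sum of the lengths of the
partitions labeling the children of `a`. -/
def LengthCond (P Q : FRTree) (Λ : Q.V → Multiset ℕ) (α : P.V → Q.V) : Prop :=
  ∀ a : Q.V, Q.Internal a → ∀ x : P.V, α x = a →
    ∑ b ∈ Q.children a, Multiset.card (Λ b) = (P.children x).card

/-- `(Λ, Q)` belongs to `Par(T, P)`. -/
def InParTP (T P Q : FRTree) (Λ : Q.V → Multiset ℕ) : Prop :=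
  InParT T Q Λ ∧ ∃ α : P.V → Q.V, IsComposition P Q α ∧ LengthCond P Q Λ α
/-- A common refinement of the tree compositions `φ : T → P` and `ψ : T → M`. -/
def IsCommonRefinement (T P M R : FRTree) (φ : T.V → P.V) (ψ : T.V → M.V)
    (ρ : T.V → R.V) (ϑ : R.V → P.V) (τ : R.V → M.V) : Prop :=
  IsComposition T R ρ ∧ IsComposition R P ϑ ∧ IsComposition R M τ ∧
  ϑ ∘ ρ = φ ∧ τ ∘ ρ = ψ

/-- Equivalence of the restricted common refinements `ρ_u` (of `(φ_u, ψ_u)`) and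
`ρ_v` (of `(φ_v, ψ_v)`), where `ρ u = a`, `ρ v = b`, `ϑ a = ϑ b` and `τ a = τ b`. -/
def RestrRefEquiv (T P M R : FRTree) (φ : T.V → P.V) (ψ : T.V → M.V)
    (ρ : T.V → R.V) (ϑ : R.V → P.V) (τ : R.V → M.V)
    (u v : T.V) (a b : R.V) : Prop :=
  ∃ (ζ : T.V → T.V) (γ : R.V → R.V),
    IsSubtreeIso T T u v ζ ∧ IsSubtreeIso R R a b γ ∧
    (∀ w ∈ T.Desc u, φ (ζ w) = φ w) ∧
    (∀ w ∈ T.Desc u, ψ (ζ w) = ψ w) ∧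
    (∀ w ∈ T.Desc u, ρ (ζ w) = γ (ρ w)) ∧
    (∀ r ∈ R.Desc a, ϑ (γ r) = ϑ r) ∧
    (∀ r ∈ R.Desc a, τ (γ r) = τ r)

/-- The coarseness condition for a common refinement. -/
def Coarseness (T P M R : FRTree) (φ : T.V → P.V) (ψ : T.V → M.V)
    (ρ : T.V → R.V) (ϑ : R.V → P.V) (τ : R.V → M.V) : Prop :=
  (∀ a b : R.V, a ≠ b → R.Internal a → R.Internal b → R.Siblings a b →
    ϑ a = ϑ b → τ a = τ b →
    ∀ u v : T.V, ρ u = a → ρ v = b →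
      ¬ RestrRefEquiv T P M R φ ψ ρ ϑ τ u v a b) ∧
  (∀ a b : R.V, a ≠ b → R.IsLeaf a → R.IsLeaf b → R.Siblings a b →
    ¬ (ϑ a = ϑ b ∧ τ a = τ b))

/-- Equivalence of two common refinements of the same couple `(φ, ψ)` of tree
compositions of `T`. -/
def RefEquiv (T P M R R' : FRTree) (φ : T.V → P.V) (ψ : T.V → M.V)
    (ρ : T.V → R.V) (ϑ : R.V → P.V) (τ : R.V → M.V)
    (ρ' : T.V → R'.V) (ϑ' : R'.V → P.V) (τ' : R'.V → M.V) : Prop :=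
  ∃ (ζ : T.V → T.V) (γ : R.V → R'.V),
    IsIsom T T ζ ∧ IsIsom R R' γ ∧
    φ ∘ ζ = φ ∧ ψ ∘ ζ = ψ ∧ ρ' ∘ ζ = γ ∘ ρ ∧ ϑ' ∘ γ = ϑ ∧ τ' ∘ γ = τ

/-- The orbit of the tree composition `φ` under the action `g • φ = φ ∘ g⁻¹` of `Aut T`. -/
def OrbitSet (T P : FRTree) (φ : T.V → P.V) : Type :=
  {ψ : T.V → P.V // ∃ g ∈ T.Aut, ψ = φ ∘ ⇑g⁻¹}

/-- The action of `Aut T` on the orbit of `φ`. -/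
def orbAct (T P : FRTree) (φ : T.V → P.V) (g : T.Aut)
    (ψ : OrbitSet T P φ) : OrbitSet T P φ :=
  ⟨ψ.1 ∘ ⇑((g : Equiv.Perm T.V))⁻¹, by
    obtain ⟨h, hh, hψ⟩ := ψ.2
    refine ⟨(g : Equiv.Perm T.V) * h, mul_mem g.2 hh, ?_⟩
    rw [hψ]
    funext x
    simp [Function.comp, mul_inv_rev]⟩

/-- The permutation representation `M^{|φ⁻¹|}` of `Aut T` on the (complex functions on
the) orbit of the tree composition `φ`. -/
noncomputable def permRep (T P : FRTree) (φ : T.V → P.V) :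
    Representation ℂ (T.Aut) (OrbitSet T P φ → ℂ) where
  toFun g :=
    { toFun := fun F ψ => F (orbAct T P φ g⁻¹ ψ)
      map_add' := fun _ _ => rfl
      map_smul' := fun _ _ => rfl }
  map_one' := by
    refine LinearMap.ext fun F => funext fun ψ => ?_
    show F (orbAct T P φ 1⁻¹ ψ) = F ψ
    have h : orbAct T P φ 1⁻¹ ψ = ψ := Subtype.ext (funext fun x => by simp [orbAct])
    rw [h]
  map_mul' := by
    intro a b
    refine LinearMap.ext fun F => funext fun ψ => ?_
    show F (orbAct T P φ (a * b)⁻¹ ψ) = F (orbAct T P φ b⁻¹ (orbAct T P φ a⁻¹ ψ))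
    have h : orbAct T P φ (a * b)⁻¹ ψ = orbAct T P φ b⁻¹ (orbAct T P φ a⁻¹ ψ) :=
      Subtype.ext (funext fun x => by simp [orbAct, mul_inv_rev])
    rw [h]

/-- Equivalence of two representations. -/
def RepEquiv {G : Type*} [Group G] {V W : Type*}
    [AddCommGroup V] [Module ℂ V] [AddCommGroup W] [Module ℂ W]
    (ρ : Representation ℂ G V) (σ : Representation ℂ G W) : Prop :=
  ∃ e : V ≃ₗ[ℂ] W, ∀ (g : G) (v : V), e (ρ g v) = σ g (e v)

/-- Irreducibility of a representation. -/
def IsIrreducibleRep {G V : Type*} [Group G] [AddCommGroup V] [Module ℂ V]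
    (ρ : Representation ℂ G V) : Prop :=
  (∃ v : V, v ≠ 0) ∧
  ∀ U : Submodule ℂ V, (∀ g : G, ∀ v ∈ U, ρ g v ∈ U) → U = ⊥ ∨ U = ⊤

/-- The space of equivariant linear maps between two representations; when `ρ` is
irreducible, its dimension is the multiplicity of `ρ` in `σ`. -/
def equivariantHoms {G : Type*} [Group G] {V W : Type*}
    [AddCommGroup V] [Module ℂ V] [AddCommGroup W] [Module ℂ W]
    (ρ : Representation ℂ G V) (σ : Representation ℂ G W) :
    Submodule ℂ (V →ₗ[ℂ] W) where
  carrier := {f | ∀ (g : G) (v : V), f (ρ g v) = σ g (f v)}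
  add_mem' := by
    intro a b ha hb g v
    simp [ha g v, hb g v]
  zero_mem' := by intro g v; simp
  smul_mem' := by
    intro c f hf g v
    simp [hf g v]

/-- The stabilizer `K_φ` of a tree composition `φ` in `Aut T`. -/
def stab (T P : FRTree) (φ : T.V → P.V) : Subgroup (T.Aut) where
  carrier := {g | ∀ x : T.V, φ ((g : Equiv.Perm T.V) x) = φ x}
  one_mem' := fun _ => rfl
  mul_mem' := by
    intro a b ha hb x
    simp only [Subgroup.coe_mul, Equiv.Perm.mul_apply]
    rw [ha ((b : Equiv.Perm T.V) x), hb x]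
  inv_mem' := by
    intro a ha x
    have := ha (((a : Equiv.Perm T.V))⁻¹ x)
    simp only [show ∀ y, (a : Equiv.Perm T.V) ((a : Equiv.Perm T.V)⁻¹ y) = y from Equiv.apply_symm_apply _] at this
    simpa using this.symm

/-- The space of the representation of `G` induced by the character `χ` of the
subgroup `K`: complex functions on `G` which are `χ`-covariant for right translation
by `K`; `G` acts by left translation. -/
noncomputable def IndSpace (G : Type*) [Group G] (K : Subgroup G) (χ : K →* ℂ) :
    Submodule ℂ (G → ℂ) where
  carrier := {f | ∀ (g : G) (k : K), f (g * k) = χ k * f g}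
  add_mem' := by
    intro a b ha hb g k
    simp only [Pi.add_apply, ha g k, hb g k]
    ring
  zero_mem' := by intro g k; simp
  smul_mem' := by
    intro c f hf g k
    simp only [Pi.smul_apply, smul_eq_mul, hf g k]
    ring

/-- The representation of `G` induced by the character `χ` of the subgroup `K`. -/
noncomputable def indRep (G : Type*) [Group G] (K : Subgroup G) (χ : K →* ℂ) :
    Representation ℂ G (IndSpace G K χ) where
  toFun g :=
    { toFun := fun f => ⟨fun x => (f : G → ℂ) (g⁻¹ * x), by
        intro x k
        have h := f.2 (g⁻¹ * x) k
        simpa [mul_assoc] using h⟩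
      map_add' := by intro a b; apply Subtype.ext; funext x; rfl
      map_smul' := by intro c a; apply Subtype.ext; funext x; rfl }
  map_one' := by
    refine LinearMap.ext fun f => Subtype.ext (funext fun x => ?_)
    simp
  map_mul' := by
    intro a b
    refine LinearMap.ext fun f => Subtype.ext (funext fun x => ?_)
    simp [mul_assoc]

/-- A sibling swap: an automorphism of order two exchanging the subtrees rooted at two
distinct siblings `u`, `v` and fixing everything else.  The sign representation of
`Aut T` is the unique homomorphism `Aut T →* ℂ` taking the value `-1` at every
sibling swap. -/
def IsSiblingSwap (T : FRTree) (g : Equiv.Perm T.V) : Prop :=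
  ∃ u v : T.V, u ≠ v ∧ T.Siblings u v ∧ g u = v ∧
    (∀ w : T.V, w ∉ T.Desc u → w ∉ T.Desc v → g w = w) ∧ g * g = 1

/-- The conjugate (transpose) of an integer partition, encoded as a multiset. -/
def conjP (m : Multiset ℕ) : Multiset ℕ :=
  ((Multiset.range m.sum).map fun i => Multiset.card (m.filter fun p => i < p)).filter
    fun n => 0 < n

/-- Two tree compositions of the same tree have `0-1` intersection. -/
def ZeroOneIntersection (T P M : FRTree) (φ : T.V → P.V) (ψ : T.V → M.V) : Prop :=
  ∀ v : T.V, T.Internal v → ∀ x : P.V, ∀ y : M.V,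
    P.IsChild x (φ v) → M.IsChild y (ψ v) →
    {w : T.V | φ w = x ∧ ψ w = y}.Subsingleton

/-- `φᵗ : T → Pᵗ` (with quotient `αᵗ`) is a transpose of the tree composition
`φ : T → P` with quotient `α : P → Q` and associated tree of partitions `Λ`. -/
def IsTranspose (T P Q Pt : FRTree) (φ : T.V → P.V) (α : P.V → Q.V)
    (Λ : Q.V → Multiset ℕ) (φt : T.V → Pt.V) (αt : Pt.V → Q.V) : Prop :=
  IsComposition T Pt φt ∧
  IsAssocLabeling T Pt Q φt αt (fun a => conjP (Λ a)) ∧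
  (αt ∘ φt = α ∘ φ) ∧
  ZeroOneIntersection T P Pt φ φt

set_option synthInstance.maxHeartbeats 400000 in
/-- The multiplicity of the irreducible representation `ρ` inside `σ`: the dimension of
the space of equivariant linear maps. -/
noncomputable def repMultiplicity {G : Type*} [Group G] {V W : Type*}
    [AddCommGroup V] [Module ℂ V] [AddCommGroup W] [Module ℂ W]
    (ρ : Representation ℂ G V) (σ : Representation ℂ G W) : ℕ :=
  Module.finrank ℂ ↥(equivariantHoms ρ σ)

/-!
For a vertex `c`, let `Aut_c = T.autStab c` be the stabilizer of `c` in `Aut T` and call `g ∈ Aut_c`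
spherically transitive at `c` if every `Aut_c`-orbit in the subtree `T_c` lies in one
`⟨g⟩`-orbit. Everything is proved at every vertex, by induction from the leaves up.

Such a `g` cycles the children of `c` along their `Aut_c`-orbits, and for a child `d` whose cycle
has length `p`, the return map `g ^ p` is spherically transitive at `d`; conversely these two
properties suffice. For existence, glue automorphisms between child subtrees into some `π` that
cycles each orbit of children, and twist `π` on one subtree per cycle so that its return map there
becomes a spherically transitive automorphism provided by induction. For conjugacy, induction
gives `τ` conjugating the return maps of `g` and `g'` at a representative child `r`, and
`g' ^ n * τ * g ^ (-n)` on the subtrees `T_{g ^ n r}` glue to the required conjugator.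
-/

open Equiv MulAction

namespace Equiv.Perm

variable {α : Type*}

theorem exists_forall_sameCycle [Finite α] : ∃ σ : Perm α, ∀ x y, σ.SameCycle x y := by
  classical
  have := Fintype.ofFinite α
  refine ⟨Finset.univ.toList.formPerm, fun x y => ?_⟩
  obtain rfl | hxy := eq_or_ne x y
  · exact SameCycle.refl _ _
  have hcard : 2 ≤ (Finset.univ : Finset α).toList.length := by
    rw [Finset.length_toList]
    exact Finset.one_lt_card.2 ⟨x, Finset.mem_univ _, y, Finset.mem_univ _, hxy⟩
  have : Std.Symm (Finset.univ : Finset α).toList.formPerm.SameCycle := ⟨fun _ _ => .symm⟩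
  exact (List.pairwise_sameCycle_formPerm (Finset.nodup_toList _) hcard).forall
    (by simp) (by simp) hxy

theorem _root_.Setoid.exists_perm_sameCycle_iff [Finite α] (s : Setoid α) :
    ∃ π : Perm α, ∀ a b, π.SameCycle a b ↔ s a b := by
  classical
  choose σ hσ using fun q : Quotient s => exists_forall_sameCycle (α := {a // ⟦a⟧ = q})
  let e := Equiv.sigmaFiberEquiv (Quotient.mk s)
  have hpow : ∀ (z : ℤ) (a : α),
      ((e.permCongr (sigmaCongrRight σ)) ^ z) a = ((σ ⟦a⟧ ^ z) ⟨a, rfl⟩ : α) := by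
    intro z a
    rw [← Equiv.permCongrHom_coe, ← map_zpow, Equiv.permCongrHom_coe, Equiv.permCongr_apply,
      ← sigmaCongrRightHom_apply, ← map_zpow]
    rfl
  refine ⟨e.permCongr (sigmaCongrRight σ), fun a b => ⟨fun ⟨z, hz⟩ => ?_, fun hab => ?_⟩⟩
  · rw [hpow] at hz
    exact Quotient.exact (hz ▸ ((σ ⟦a⟧ ^ z) ⟨a, rfl⟩).2).symm
  · obtain ⟨z, hz⟩ := hσ ⟦a⟧ ⟨a, rfl⟩ ⟨b, (Quotient.sound hab).symm⟩
    exact ⟨z, by rw [hpow, hz]⟩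

theorem zpow_apply_of_semiconj_on {a b t : Perm α} {s : Set α}
    (hs : ∀ x ∈ s, ∀ z : ℤ, (a ^ z) x ∈ s) (h : ∀ x ∈ s, t (a x) = b (t x))
    {x : α} (hx : x ∈ s) (z : ℤ) : t ((a ^ z) x) = (b ^ z) (t x) := by
  induction z using Int.induction_on with
  | zero => simp
  | succ n ih =>
    rw [add_comm, zpow_one_add, zpow_one_add, mul_apply, mul_apply, ← ih, h _ (hs x hx n)]
  | pred n ih =>
    have hy := hs x hx (-n - 1)
    apply b.injective
    rw [← h _ hy, ← mul_apply a, ← zpow_one_add, ← mul_apply b, ← zpow_one_add, add_sub_cancel, ih]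

theorem period_eq_of_sameCycle_iff [Finite α] {a b : Perm α} {x : α}
    (h : ∀ y, a.SameCycle x y ↔ b.SameCycle x y) : period a x = period b x := by
  classical
  have := Fintype.ofFinite α
  have horbit : ∀ c : Perm α, orbit (Subgroup.zpowers c) x = {y | c.SameCycle x y} := by
    intro c
    ext y
    constructor
    · rintro ⟨⟨_, m, rfl⟩, rfl⟩
      exact ⟨m, rfl⟩
    · rintro ⟨m, rfl⟩
      exact ⟨⟨c ^ m, m, rfl⟩, rfl⟩
  simp only [period_eq_minimalPeriod, minimalPeriod_eq_card]
  exact Fintype.card_congr (Equiv.setCongr (by rw [horbit, horbit]; ext y; exact h y))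

theorem zpow_apply_eq_zpow_apply_iff {g : Perm α} {x : α} {m n : ℤ} :
    (g ^ m) x = (g ^ n) x ↔ (period g x : ℤ) ∣ m - n := by
  rw [← zpow_smul_eq_iff_period_dvd, Perm.smul_def, sub_eq_neg_add, zpow_add, mul_apply,
    zpow_neg, inv_eq_iff_eq]

end Equiv.Perm

namespace FRTree

variable {T : FRTree} {c d d' u v : T.V} {g g' π : Perm T.V}

theorem eq_root_of_iterate_parent_eq_self {n : ℕ} (h : T.parent^[n + 1] v = v) : v = T.root := by
  obtain ⟨k, hk⟩ := T.reaches_root v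
  have hper : Function.IsPeriodicPt T.parent ((n + 1) * k) v := Function.IsPeriodicPt.mul_const h k
  calc v = T.parent^[(n + 1) * k - k + k] v := by
        rw [Nat.sub_add_cancel (Nat.le_mul_of_pos_left k n.succ_pos)]; exact hper.symm
    _ = T.root := by rw [Function.iterate_add_apply, hk, Function.iterate_fixed T.parent_root]

theorem mem_desc_root (v : T.V) : v ∈ T.Desc T.root := T.reaches_root v

theorem self_mem_desc (c : T.V) : c ∈ T.Desc c := ⟨0, rfl⟩

theorem mem_desc_of_parent_mem_desc (h : T.parent v ∈ T.Desc c) : v ∈ T.Desc c :=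
  let ⟨n, hn⟩ := h
  ⟨n + 1, hn⟩

theorem parent_mem_desc (h : v ∈ T.Desc c) (hvc : v ≠ c) : T.parent v ∈ T.Desc c := by
  obtain ⟨_ | n, hn⟩ := h
  · exact absurd hn hvc
  · exact ⟨n, hn⟩

theorem mem_desc_or_mem_desc (hc : v ∈ T.Desc c) (hd : v ∈ T.Desc d) :
    c ∈ T.Desc d ∨ d ∈ T.Desc c := by
  obtain ⟨m, rfl⟩ := hc
  obtain ⟨n, rfl⟩ := hd
  rcases le_total m n with h | h
  · exact .inl ⟨n - m, by rw [← Function.iterate_add_apply, Nat.sub_add_cancel h]⟩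
  · exact .inr ⟨m - n, by rw [← Function.iterate_add_apply, Nat.sub_add_cancel h]⟩

theorem IsChild.mem_desc (hd : T.IsChild d c) : d ∈ T.Desc c := ⟨1, hd.2⟩

theorem IsChild.desc_subset (hd : T.IsChild d c) : T.Desc d ⊆ T.Desc c := fun _ ⟨n, hn⟩ =>
  ⟨n + 1, by rw [Function.iterate_succ_apply', hn, hd.2]⟩

theorem IsChild.notMem_desc (hd : T.IsChild d c) : c ∉ T.Desc d := by
  rintro ⟨n, hn⟩
  have hc : c = T.root :=
    eq_root_of_iterate_parent_eq_self (by rw [Function.iterate_succ_apply', hn, hd.2])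
  exact hd.1 (by rw [← hn, hc, Function.iterate_fixed T.parent_root])

theorem IsChild.eq_of_mem_desc (hd : T.IsChild d c) (hd' : T.IsChild d' c)
    (hv : v ∈ T.Desc d) (hv' : v ∈ T.Desc d') : d = d' := by
  by_contra hne
  rcases mem_desc_or_mem_desc hv hv' with h | h
  · exact hd'.notMem_desc (hd.2 ▸ parent_mem_desc h hne)
  · exact hd.notMem_desc (hd'.2 ▸ parent_mem_desc h (Ne.symm hne))

theorem exists_isChild_mem_desc (hv : v ∈ T.Desc c) (hvc : v ≠ c) :
    ∃ d, T.IsChild d c ∧ v ∈ T.Desc d := by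
  obtain ⟨n, hn⟩ := hv
  induction n generalizing v with
  | zero => exact absurd hn hvc
  | succ n ih =>
    by_cases hp : T.parent v = c
    · refine ⟨v, ⟨fun hv => hvc ?_, hp⟩, self_mem_desc v⟩
      rw [← hp, hv, T.parent_root]
    · obtain ⟨d, hd, hpd⟩ := ih hp hn
      exact ⟨d, hd, mem_desc_of_parent_mem_desc hpd⟩

theorem isChild_wellFounded (T : FRTree) : WellFounded fun d c : T.V => T.IsChild d c :=
  Subrelation.wf
    (fun hd => Set.ncard_lt_ncard ((Set.ssubset_iff_of_subset hd.desc_subset).2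
      ⟨_, self_mem_desc _, hd.notMem_desc⟩))
    (measure fun c : T.V => (T.Desc c).ncard).wf

theorem mem_aut_iff : g ∈ T.Aut ↔ ∀ v, T.parent (g v) = g (T.parent v) := by
  refine ⟨fun hg v => ?_, fun h => ?_⟩
  · obtain rfl | hv := eq_or_ne v T.root
    · rw [T.parent_root, hg.1, T.parent_root]
    · exact (hg.2 v hv).2
  · have hroot : g T.root = T.root :=
      eq_root_of_iterate_parent_eq_self (n := 0) (by rw [Function.iterate_one, h, T.parent_root])
    exact ⟨hroot, fun v hv => ⟨fun hgv => hv (g.injective (hgv.trans hroot.symm)), h v⟩⟩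

theorem apply_mem_desc_iff (hg : g ∈ T.Aut) : g v ∈ T.Desc (g c) ↔ v ∈ T.Desc c := by
  have hcomm : ∀ n, T.parent^[n] (g v) = g (T.parent^[n] v) :=
    fun n => Function.Commute.iterate_left (fun w => mem_aut_iff.1 hg w) n v
  simp only [Desc, Set.mem_ofPred_eq, hcomm, g.injective.eq_iff]

def autStab (T : FRTree) (c : T.V) : Subgroup (Perm T.V) :=
  T.Aut ⊓ stabilizer (Perm T.V) c

theorem mem_autStab : g ∈ T.autStab c ↔ g ∈ T.Aut ∧ g c = c := by
  rw [autStab, Subgroup.mem_inf, mem_stabilizer_iff, Perm.smul_def]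

theorem autStab_root : T.autStab T.root = T.Aut :=
  inf_eq_left.2 fun _ hg => mem_stabilizer_iff.2 hg.1

theorem autStab_le_of_isChild (hd : T.IsChild d c) : T.autStab d ≤ T.autStab c := fun g hg => by
  obtain ⟨hga, hgd⟩ := mem_autStab.1 hg
  exact mem_autStab.2 ⟨hga, by rw [← hd.2, ← mem_aut_iff.1 hga, hgd]⟩

theorem pow_period_mem_autStab (hg : g ∈ T.Aut) (c : T.V) : g ^ period g c ∈ T.autStab c :=
  mem_autStab.2 ⟨pow_mem hg _, by rw [← Perm.smul_def, pow_period_smul]⟩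

theorem apply_mem_desc (hg : g ∈ T.autStab c) (hv : v ∈ T.Desc c) : g v ∈ T.Desc c := by
  simpa only [(mem_autStab.1 hg).2] using (apply_mem_desc_iff (mem_autStab.1 hg).1).2 hv

theorem IsChild.apply_of_mem_autStab (hd : T.IsChild d c) (hg : g ∈ T.autStab c) :
    T.IsChild (g d) c := by
  obtain ⟨hga, hgc⟩ := mem_autStab.1 hg
  exact ⟨(hga.2 d hd.1).1, by rw [(hga.2 d hd.1).2, hd.2, hgc]⟩

theorem orbitRel_autStab_iff : orbitRel (T.autStab c) T.V u v ↔ ∃ h ∈ T.autStab c, h v = u := by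
  simp [orbitRel_apply, mem_orbit_iff, Subgroup.smul_def, Perm.smul_def]

noncomputable def orbitRep (c v : T.V) : T.V :=
  (Quotient.mk (orbitRel (T.autStab c) T.V) v).out

theorem exists_apply_eq_orbitRep (c v : T.V) : ∃ h ∈ T.autStab c, h v = orbitRep c v :=
  orbitRel_autStab_iff.1 (Quotient.mk_out v)

theorem orbitRep_apply (hg : g ∈ T.autStab c) (v : T.V) : orbitRep c (g v) = orbitRep c v :=
  congrArg Quotient.out (Quotient.sound (orbitRel_autStab_iff.2 ⟨g, hg, rfl⟩))

theorem orbitRep_orbitRep (c v : T.V) : orbitRep c (orbitRep c v) = orbitRep c v := by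
  obtain ⟨h, hh, hv⟩ := exists_apply_eq_orbitRep c v
  simpa only [hv] using orbitRep_apply hh v

theorem IsChild.orbitRep (hd : T.IsChild d c) : T.IsChild (orbitRep c d) c := by
  obtain ⟨h, hh, hhd⟩ := exists_apply_eq_orbitRep c d
  exact hhd ▸ hd.apply_of_mem_autStab hh

section Glue

variable {k : T.V → Perm T.V}

open Classical in
noncomputable def glue (c : T.V) (k : T.V → Perm T.V) (v : T.V) : T.V :=
  if h : ∃ d, T.IsChild d c ∧ v ∈ T.Desc d then k h.choose v else v

theorem glue_apply_of_mem (hd : T.IsChild d c) (hv : v ∈ T.Desc d) : glue c k v = k d v := by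
  have h : ∃ d, T.IsChild d c ∧ v ∈ T.Desc d := ⟨d, hd, hv⟩
  rw [glue, dif_pos h, h.choose_spec.1.eq_of_mem_desc hd h.choose_spec.2 hv]

theorem glue_apply_of_forall_notMem (hv : ∀ d, T.IsChild d c → v ∉ T.Desc d) :
    glue c k v = v :=
  dif_neg fun ⟨d, hd, hvd⟩ => hv d hd hvd

variable (hk : ∀ d, T.IsChild d c → k d ∈ T.autStab c)
include hk

theorem glue_mem_desc (hd : T.IsChild d c) (hv : v ∈ T.Desc d) :
    T.IsChild (k d d) c ∧ glue c k v ∈ T.Desc (k d d) :=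
  ⟨hd.apply_of_mem_autStab (hk d hd),
    by rw [glue_apply_of_mem hd hv]; exact (apply_mem_desc_iff (mem_autStab.1 (hk d hd)).1).2 hv⟩

theorem injective_glue (hinj : ∀ d d', T.IsChild d c → T.IsChild d' c → k d d = k d' d' → d = d') :
    Function.Injective (glue c k) := by
  intro v w hvw
  by_cases hv : ∃ d, T.IsChild d c ∧ v ∈ T.Desc d <;>
    by_cases hw : ∃ d, T.IsChild d c ∧ w ∈ T.Desc d
  · obtain ⟨d, hd, hvd⟩ := hv
    obtain ⟨e, he, hwe⟩ := hw
    obtain ⟨hd', hv'⟩ := glue_mem_desc hk hd hvd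
    obtain ⟨he', hw'⟩ := glue_mem_desc hk he hwe
    obtain rfl := hinj d e hd he (hd'.eq_of_mem_desc he' hv' (hvw ▸ hw'))
    rw [glue_apply_of_mem hd hvd, glue_apply_of_mem hd hwe] at hvw
    exact (k d).injective hvw
  · simp only [not_exists, not_and] at hw
    obtain ⟨d, hd, hvd⟩ := hv
    obtain ⟨hd', hv'⟩ := glue_mem_desc hk hd hvd
    rw [hvw, glue_apply_of_forall_notMem hw] at hv'
    exact absurd hv' (hw _ hd')
  · simp only [not_exists, not_and] at hv
    obtain ⟨d, hd, hwd⟩ := hw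
    obtain ⟨hd', hw'⟩ := glue_mem_desc hk hd hwd
    rw [← hvw, glue_apply_of_forall_notMem hv] at hw'
    exact absurd hw' (hv _ hd')
  · simp only [not_exists, not_and] at hv hw
    rwa [glue_apply_of_forall_notMem hv, glue_apply_of_forall_notMem hw] at hvw

theorem parent_glue (v : T.V) : T.parent (glue c k v) = glue c k (T.parent v) := by
  by_cases hv : ∃ d, T.IsChild d c ∧ v ∈ T.Desc d
  · obtain ⟨d, hd, hvd⟩ := hv
    obtain rfl | hne := eq_or_ne v d
    · rw [glue_apply_of_mem hd hvd, (glue_mem_desc hk hd hvd).1.2, hd.2,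
        glue_apply_of_forall_notMem fun e he => he.notMem_desc]
    · rw [glue_apply_of_mem hd hvd, glue_apply_of_mem hd (parent_mem_desc hvd hne),
        mem_aut_iff.1 (mem_autStab.1 (hk d hd)).1]
  · simp only [not_exists, not_and] at hv
    rw [glue_apply_of_forall_notMem hv, glue_apply_of_forall_notMem fun e he hpe =>
      hv e he (mem_desc_of_parent_mem_desc hpe)]

theorem exists_mem_autStab_eqOn_children
    (hinj : ∀ d d', T.IsChild d c → T.IsChild d' c → k d d = k d' d' → d = d') :
    ∃ g ∈ T.autStab c, ∀ d, T.IsChild d c → ∀ v ∈ T.Desc d, g v = k d v :=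
  ⟨Equiv.ofBijective _ (Finite.injective_iff_bijective.1 (injective_glue hk hinj)),
    mem_autStab.2 ⟨mem_aut_iff.2 (parent_glue hk),
      glue_apply_of_forall_notMem fun _ he => he.notMem_desc⟩,
    fun _ hd _ hv => glue_apply_of_mem hd hv⟩

end Glue

theorem zpow_apply_eq_of_eqOn_children (hg : g ∈ T.autStab c)
    (hgπ : ∀ d, T.IsChild d c → g d = π d) (hd : T.IsChild d c) (z : ℤ) :
    (g ^ z) d = (π ^ z) d :=
  Perm.zpow_apply_of_semiconj_on (t := 1) (s := {d | T.IsChild d c})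
    (fun _ hx z => hx.apply_of_mem_autStab (zpow_mem hg z)) hgπ hd z

theorem sameCycle_iff_of_eqOn_children (hg : g ∈ T.autStab c)
    (hgπ : ∀ d, T.IsChild d c → g d = π d) (hd : T.IsChild d c) :
    g.SameCycle d v ↔ π.SameCycle d v := by
  simp only [Perm.SameCycle, zpow_apply_eq_of_eqOn_children hg hgπ hd]

/-- Only one inclusion of orbits is required: the other holds for every `g ∈ T.autStab c`. -/
def IsSphericallyTransitiveAt (T : FRTree) (c : T.V) (g : Perm T.V) : Prop :=
  ∀ u ∈ T.Desc c, ∀ h ∈ T.autStab c, g.SameCycle u (h u)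

namespace IsSphericallyTransitiveAt

theorem sameCycle (H : T.IsSphericallyTransitiveAt c g') (hg : g ∈ T.autStab c)
    (hu : u ∈ T.Desc c) (h : g.SameCycle u v) : g'.SameCycle u v := by
  obtain ⟨z, rfl⟩ := h
  exact H u hu _ (zpow_mem hg z)

theorem period_eq (H : T.IsSphericallyTransitiveAt c g) (hg : g ∈ T.autStab c)
    (H' : T.IsSphericallyTransitiveAt c g') (hg' : g' ∈ T.autStab c) (hu : u ∈ T.Desc c) :
    period g u = period g' u :=
  Perm.period_eq_of_sameCycle_iff fun _ => ⟨H'.sameCycle hg hu, H.sameCycle hg' hu⟩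

theorem sameCycle_orbitRep (H : T.IsSphericallyTransitiveAt c g) (hd : T.IsChild d c) :
    g.SameCycle (orbitRep c d) d := by
  obtain ⟨h, hh, hhd⟩ := exists_apply_eq_orbitRep c d
  have := H _ (hhd ▸ hd.apply_of_mem_autStab hh).mem_desc h⁻¹ (inv_mem hh)
  rw [← hhd] at this ⊢
  simpa using this

theorem pow_period (H : T.IsSphericallyTransitiveAt c g) (hg : g ∈ T.autStab c)
    (hd : T.IsChild d c) : T.IsSphericallyTransitiveAt d (g ^ period g d) := by
  intro u hu h hh
  obtain ⟨z, hz⟩ := H u (hd.desc_subset hu) h (autStab_le_of_isChild hd hh)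
  have hgz := zpow_mem hg z
  have hzd : (g ^ z) d = d := (hd.apply_of_mem_autStab hgz).eq_of_mem_desc hd
    ((apply_mem_desc_iff (mem_autStab.1 hgz).1).2 hu) (hz ▸ apply_mem_desc hh hu)
  obtain ⟨q, hq⟩ := zpow_smul_eq_iff_period_dvd.1 (by rwa [Perm.smul_def])
  exact ⟨q, by rw [← zpow_natCast, ← zpow_mul, ← hq, hz]⟩

theorem congr {a b : Perm T.V} (H : T.IsSphericallyTransitiveAt c a) (ha : a ∈ T.autStab c)
    (hab : ∀ x ∈ T.Desc c, a x = b x) : T.IsSphericallyTransitiveAt c b := by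
  intro u hu h hh
  obtain ⟨z, hz⟩ := H u hu h hh
  refine ⟨z, ?_⟩
  rw [← hz]
  exact (Perm.zpow_apply_of_semiconj_on (t := 1)
    (fun _ hx z => apply_mem_desc (zpow_mem ha z) hx) hab hu z).symm

theorem of_children (hg : g ∈ T.autStab c)
    (hcyc : ∀ d, T.IsChild d c → ∀ h ∈ T.autStab c, g.SameCycle d (h d))
    (hret : ∀ d, T.IsChild d c →
      ∃ r, g.SameCycle r d ∧ T.IsSphericallyTransitiveAt r (g ^ period g r)) :
    T.IsSphericallyTransitiveAt c g := by
  intro u hu h hh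
  obtain rfl | hne := eq_or_ne u c
  · rw [(mem_autStab.1 hh).2]
  obtain ⟨d, hd, hud⟩ := exists_isChild_mem_desc hu hne
  obtain ⟨r, ⟨a, ha⟩, hr⟩ := hret d hd
  obtain ⟨b, hb⟩ := Perm.SameCycle.trans ⟨a, ha⟩ (hcyc d hd h hh)
  have hga : g ^ a ∈ T.Aut := (mem_autStab.1 (zpow_mem hg a)).1
  have hgb : g ^ b ∈ T.Aut := (mem_autStab.1 (zpow_mem hg b)).1
  -- transport the pair `(u, h u)` into the subtree of `r`
  have hk : (g ^ b)⁻¹ * h * g ^ a ∈ T.autStab r :=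
    mem_autStab.2 ⟨mul_mem (mul_mem (inv_mem hgb) (mem_autStab.1 hh).1) hga,
      by simp [Perm.mul_apply, ha, ← hb]⟩
  have hx : (g ^ a)⁻¹ u ∈ T.Desc r := by
    simpa [← ha] using (apply_mem_desc_iff (inv_mem hga)).2 hud
  have := (hr _ hx _ hk).of_pow
  rwa [Perm.mul_apply, Perm.mul_apply, ← Perm.mul_apply (g ^ a), mul_inv_cancel, Perm.one_apply,
    ← zpow_neg, ← zpow_neg, Perm.sameCycle_zpow_left, Perm.sameCycle_zpow_right] at this

end IsSphericallyTransitiveAt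

theorem exists_mem_autStab_sameCycle_iff (c : T.V) :
    ∃ π ∈ T.autStab c, ∀ d, T.IsChild d c → ∀ e, π.SameCycle d e ↔ ∃ h ∈ T.autStab c, h d = e := by
  obtain ⟨π₀, hπ₀⟩ := Setoid.exists_perm_sameCycle_iff (orbitRel (T.autStab c) T.V)
  have hrel : ∀ u v, π₀.SameCycle u v ↔ ∃ h ∈ T.autStab c, h u = v := fun u v => by
    rw [Perm.sameCycle_comm, hπ₀, orbitRel_autStab_iff]
  choose σ hσ hσπ using fun v => (hrel v (π₀ v)).1 (Perm.sameCycle_apply_right.2 (.refl _ _))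
  obtain ⟨π, hπ, hπσ⟩ := exists_mem_autStab_eqOn_children (k := σ) (fun d _ => hσ d)
    fun d d' _ _ h => π₀.injective (by rwa [hσπ, hσπ] at h)
  refine ⟨π, hπ, fun d hd e => ?_⟩
  rw [← hrel, sameCycle_iff_of_eqOn_children hπ
    (fun d hd => (hπσ d hd d (self_mem_desc d)).trans (hσπ d)) hd]

theorem pow_period_apply_eq {a : Perm T.V} {r : T.V} (hπ : π ∈ T.Aut) (ha : a ∈ T.autStab r)
    (hoff : ∀ j, 0 < j → j < period π r → ∀ y ∈ T.Desc ((π ^ j) r), g y = π y)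
    (hon : ∀ x ∈ T.Desc r, g x = (π * (π ^ period π r)⁻¹ * a) x)
    {x : T.V} (hx : x ∈ T.Desc r) : (g ^ period π r) x = a x := by
  set m := period π r
  have hgx : g x ∈ T.Desc (π r) := by
    have hπm : (π ^ m)⁻¹ ∈ T.autStab r := inv_mem (pow_period_mem_autStab hπ r)
    rw [hon x hx, Perm.mul_apply]
    exact (apply_mem_desc_iff hπ).2 (apply_mem_desc hπm (apply_mem_desc ha hx))
  have hiter : ∀ j < m, (g ^ (j + 1)) x = (π ^ j) (g x) := by
    intro j hj
    induction j with
    | zero => simp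
    | succ j ih =>
      have hy : (π ^ j) (g x) ∈ T.Desc ((π ^ (j + 1)) r) := by
        rw [pow_succ, Perm.mul_apply]
        exact (apply_mem_desc_iff (pow_mem hπ j)).2 hgx
      rw [pow_succ', Perm.mul_apply, ih (by omega), hoff (j + 1) j.succ_pos hj _ hy, pow_succ',
        Perm.mul_apply]
  obtain ⟨j, hj⟩ : ∃ j, m = j + 1 :=
    Nat.exists_eq_add_one.2 (period_pos_of_orderOf_pos (orderOf_pos π) r)
  rw [hj, hiter j (by omega), hon x hx, ← Perm.mul_apply, ← mul_assoc, ← mul_assoc, ← pow_succ,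
    ← hj, mul_inv_cancel, one_mul]

/-- On the subtree of an orbit representative `r`, the factor `(π ^ period π r)⁻¹ * a r` makes the
first return map of `g` to that subtree equal to `a r` (see `pow_period_apply_eq`). -/
theorem exists_twist (hπ : π ∈ T.autStab c) {a : T.V → Perm T.V}
    (ha : ∀ d, T.IsChild d c → a d ∈ T.autStab d) :
    ∃ g ∈ T.autStab c, (∀ d, T.IsChild d c → g d = π d) ∧ ∀ d, T.IsChild d c → ∀ v ∈ T.Desc d,
      g v = (if orbitRep c d = d then π * (π ^ period π d)⁻¹ * a d else π) v := by
  set k : T.V → Perm T.V := fun d =>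
    if orbitRep c d = d then π * (π ^ period π d)⁻¹ * a d else π
  have hkd : ∀ d, T.IsChild d c → k d d = π d := fun d hd => by
    simp only [k]
    split_ifs
    · simp only [Perm.mul_apply, (mem_autStab.1 (ha d hd)).2,
        (mem_autStab.1 (inv_mem (pow_period_mem_autStab (mem_autStab.1 hπ).1 d))).2]
    · rfl
  obtain ⟨g, hg, hgk⟩ := exists_mem_autStab_eqOn_children (k := k) (fun d hd => by
      simp only [k]
      split_ifs
      exacts [mul_mem (mul_mem hπ (inv_mem (pow_mem hπ _))) (autStab_le_of_isChild hd (ha d hd)),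
        hπ])
    fun d d' hd hd' h => π.injective (by rwa [hkd d hd, hkd d' hd'] at h)
  exact ⟨g, hg, fun d hd => (hgk d hd d (self_mem_desc d)).trans (hkd d hd), hgk⟩

theorem exists_isSphericallyTransitiveAt_of_children
    (ih : ∀ d, T.IsChild d c → ∃ a ∈ T.autStab d, T.IsSphericallyTransitiveAt d a) :
    ∃ g ∈ T.autStab c, T.IsSphericallyTransitiveAt c g := by
  obtain ⟨π, hπ, hπcyc⟩ := exists_mem_autStab_sameCycle_iff c
  choose a ha using fun d => if hd : T.IsChild d c then (ih d hd).imp fun _ h _ => h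
    else ⟨1, fun h => absurd h hd⟩
  obtain ⟨g, hg, hgπ, hgk⟩ := exists_twist hπ fun d hd => (ha d hd).1
  refine ⟨g, hg, .of_children hg (fun d hd h hh => ?_) fun d hd => ⟨orbitRep c d, ?_, ?_⟩⟩
  · rw [sameCycle_iff_of_eqOn_children hg hgπ hd, hπcyc d hd]
    exact ⟨h, hh, rfl⟩
  · obtain ⟨h, hh, hhd⟩ := exists_apply_eq_orbitRep c d
    rw [sameCycle_iff_of_eqOn_children hg hgπ hd.orbitRep, hπcyc _ hd.orbitRep]
    exact ⟨h⁻¹, inv_mem hh, by rw [← hhd]; simp⟩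
  have hr := hd.orbitRep
  set r := orbitRep c d
  rw [Perm.period_eq_of_sameCycle_iff fun _ => sameCycle_iff_of_eqOn_children hg hgπ hr]
  refine (ha r hr).2.congr (ha r hr).1 fun x hx => (pow_period_apply_eq (mem_autStab.1 hπ).1
    (ha r hr).1 (fun j hj0 hjm y hy => ?_) (fun x hx => ?_) hx).symm
  · have hne : orbitRep c ((π ^ j) r) ≠ (π ^ j) r := by
      rw [orbitRep_apply (pow_mem hπ j), orbitRep_orbitRep]
      intro h
      have := pow_smul_eq_iff_period_dvd.1 (by rw [Perm.smul_def]; exact h.symm)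
      exact absurd (Nat.le_of_dvd hj0 this) (by omega)
    rw [hgk _ (hr.apply_of_mem_autStab (pow_mem hπ j)) y hy, if_neg hne]
  · rw [hgk r hr x hx, orbitRep_orbitRep, if_pos rfl]

theorem exists_isSphericallyTransitiveAt (c : T.V) :
    ∃ g ∈ T.autStab c, T.IsSphericallyTransitiveAt c g := by
  induction c using T.isChild_wellFounded.induction with
  | _ c ih => exact exists_isSphericallyTransitiveAt_of_children ih

theorem zpow_conj_apply_eq {τ : Perm T.V} {r x : T.V} (hgp : g ^ period g r ∈ T.autStab r)
    (hτ : ∀ y ∈ T.Desc r, τ ((g ^ period g r) y) = (g' ^ period g r) (τ y))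
    {m n : ℤ} (hmn : (g ^ m) r = (g ^ n) r) (hx : (g ^ n)⁻¹ x ∈ T.Desc r) :
    (g' ^ m) (τ ((g ^ m)⁻¹ x)) = (g' ^ n) (τ ((g ^ n)⁻¹ x)) := by
  set p := period g r
  obtain ⟨q, hq⟩ := Perm.zpow_apply_eq_zpow_apply_iff.1 hmn
  obtain rfl : m = n + p * q := by linarith
  have hsplit : ∀ f : Perm T.V, f ^ (n + p * q) = f ^ n * (f ^ p) ^ q := fun f => by
    rw [zpow_add, zpow_mul, zpow_natCast]
  rw [hsplit, hsplit, mul_inv_rev, ← zpow_neg, Perm.mul_apply ((g ^ p) ^ (-q)),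
    Perm.zpow_apply_of_semiconj_on (fun y hy z => apply_mem_desc (zpow_mem hgp z) hy) hτ hx,
    Perm.mul_apply (g' ^ n), ← Perm.mul_apply ((g' ^ p) ^ q), ← zpow_add, add_neg_cancel,
    zpow_zero, Perm.one_apply]

theorem semiconj_of_eqOn_children {t : Perm T.V} {τ : T.V → Perm T.V} {n : T.V → ℤ}
    (hg : g ∈ T.autStab c) (hg' : g' ∈ T.autStab c) (ht : t ∈ T.autStab c)
    (hτ : ∀ r, T.IsChild r c →
      ∀ y ∈ T.Desc r, τ r ((g ^ period g r) y) = (g' ^ period g r) (τ r y))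
    (hn : ∀ d, T.IsChild d c → (g ^ n d) (orbitRep c d) = d)
    (htk : ∀ d, T.IsChild d c → ∀ x ∈ T.Desc d,
      t x = (g' ^ n d * τ (orbitRep c d) * (g ^ n d)⁻¹) x)
    {x : T.V} (hx : x ∈ T.Desc c) : t (g x) = g' (t x) := by
  have hga := (mem_autStab.1 hg).1
  obtain rfl | hne := eq_or_ne x c
  · rw [(mem_autStab.1 hg).2, (mem_autStab.1 ht).2, (mem_autStab.1 hg').2]
  obtain ⟨d, hd, hxd⟩ := exists_isChild_mem_desc hx hne
  have hgd := hd.apply_of_mem_autStab hg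
  have hrep : orbitRep c (g d) = orbitRep c d := orbitRep_apply hg d
  have hxr : (g ^ n d)⁻¹ x ∈ T.Desc (orbitRep c d) := by
    simpa only [Perm.inv_eq_iff_eq.2 (hn d hd).symm]
      using (apply_mem_desc_iff (inv_mem (zpow_mem hga (n d)))).2 hxd
  have hsucc : (g ^ (1 + n d))⁻¹ (g x) = (g ^ n d)⁻¹ x := by simp [zpow_one_add]
  rw [htk _ hgd _ ((apply_mem_desc_iff hga).2 hxd), htk d hd x hxd]
  simp only [Perm.mul_apply, hrep]
  rw [zpow_conj_apply_eq (pow_period_mem_autStab hga _) (hτ _ hd.orbitRep)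
    (n := 1 + n d) (by rw [zpow_one_add, Perm.mul_apply, hn d hd, ← hrep, hn _ hgd])
    (hsucc ▸ hxr), hsucc, zpow_one_add, Perm.mul_apply]

theorem IsSphericallyTransitiveAt.exists_conj_of_children
    (ih : ∀ d, T.IsChild d c → ∀ {a b : Perm T.V},
      T.IsSphericallyTransitiveAt d a → a ∈ T.autStab d →
      T.IsSphericallyTransitiveAt d b → b ∈ T.autStab d →
        ∃ τ ∈ T.autStab d, ∀ x ∈ T.Desc d, τ (a x) = b (τ x))
    (H : T.IsSphericallyTransitiveAt c g) (hg : g ∈ T.autStab c)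
    (H' : T.IsSphericallyTransitiveAt c g') (hg' : g' ∈ T.autStab c) :
    ∃ t ∈ T.autStab c, ∀ x ∈ T.Desc c, t (g x) = g' (t x) := by
  have hperiod : ∀ r, T.IsChild r c → period g r = period g' r :=
    fun r hr => H.period_eq hg H' hg' hr.mem_desc
  choose τ hτ using fun r => if hr : T.IsChild r c then
    (ih r hr (H.pow_period hg hr) (pow_period_mem_autStab (mem_autStab.1 hg).1 r)
      (hperiod r hr ▸ H'.pow_period hg' hr)
      (hperiod r hr ▸ pow_period_mem_autStab (mem_autStab.1 hg').1 r)).imp fun _ h _ => h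
    else ⟨1, fun h => absurd h hr⟩
  choose n hn using fun d => if hd : T.IsChild d c then
    (H.sameCycle_orbitRep hd).imp fun _ h _ => h else ⟨(0 : ℤ), fun h => absurd h hd⟩
  have hkd : ∀ d, T.IsChild d c →
      (g' ^ n d * τ (orbitRep c d) * (g ^ n d)⁻¹) d = (g' ^ n d) (orbitRep c d) := fun d hd => by
    simp only [Perm.mul_apply, Perm.inv_eq_iff_eq.2 (hn d hd).symm,
      (mem_autStab.1 (hτ _ hd.orbitRep).1).2]
  obtain ⟨t, ht, htk⟩ := exists_mem_autStab_eqOn_children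
    (fun d hd => mul_mem (mul_mem (zpow_mem hg' _)
      (autStab_le_of_isChild hd.orbitRep (hτ _ hd.orbitRep).1)) (inv_mem (zpow_mem hg _)))
    fun d e hd he h => by
      rw [hkd d hd, hkd e he] at h
      have hde : orbitRep c d = orbitRep c e := by
        rw [← orbitRep_orbitRep c d, ← orbitRep_apply (zpow_mem hg' (n d)), h,
          orbitRep_apply (zpow_mem hg' _), orbitRep_orbitRep]
      rwa [← hde, Perm.zpow_apply_eq_zpow_apply_iff, ← hperiod _ hd.orbitRep,
        ← Perm.zpow_apply_eq_zpow_apply_iff, hn d hd, hde, hn e he] at h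
  exact ⟨t, ht, fun x hx => semiconj_of_eqOn_children hg hg' ht
    (fun r hr => (hτ r hr).2) hn htk hx⟩

theorem IsSphericallyTransitiveAt.exists_conj {c : T.V} {a b : Perm T.V}
    (H : T.IsSphericallyTransitiveAt c a) (ha : a ∈ T.autStab c)
    (H' : T.IsSphericallyTransitiveAt c b) (hb : b ∈ T.autStab c) :
    ∃ τ ∈ T.autStab c, ∀ x ∈ T.Desc c, τ (a x) = b (τ x) := by
  induction c using T.isChild_wellFounded.induction generalizing a b with
  | _ c ih => exact H.exists_conj_of_children (fun d hd _ _ => ih d hd) ha H' hb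

theorem isSphericallyTransitiveAt_root_iff (hg : g ∈ T.Aut) :
    T.IsSphericallyTransitiveAt T.root g ↔
      ∀ u v, (∃ n : ℕ, (g ^ n) u = v) ↔ ∃ h ∈ T.Aut, h u = v := by
  rw [IsSphericallyTransitiveAt, autStab_root]
  refine ⟨fun H u v => ⟨fun ⟨n, hn⟩ => ⟨g ^ n, pow_mem hg n, hn⟩, fun ⟨h, hh, huv⟩ =>
    huv ▸ (H u (mem_desc_root u) h hh).exists_nat_pow_eq⟩, fun H u _ h hh => ?_⟩
  obtain ⟨n, hn⟩ := (H u (h u)).2 ⟨h, hh, rfl⟩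
  exact ⟨n, by rwa [zpow_natCast]⟩

end FRTree

/-- **Corollary.**  There exists an automorphism `g` of `T` whose `⟨g⟩`-orbits coincide
with the orbits of the full group `Aut T` on `T`; moreover, any two automorphisms with
this property are conjugate in `Aut T`. -/
theorem exists_spherically_transitive_automorphism (T : FRTree) :
    (∃ g ∈ T.Aut, ∀ u v : T.V,
      (∃ n : ℕ, (g ^ n) u = v) ↔ ∃ h ∈ T.Aut, h u = v) ∧
    ∀ g ∈ T.Aut, ∀ g' ∈ T.Aut,
      (∀ u v : T.V, (∃ n : ℕ, (g ^ n) u = v) ↔ ∃ h ∈ T.Aut, h u = v) →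
      (∀ u v : T.V, (∃ n : ℕ, (g' ^ n) u = v) ↔ ∃ h ∈ T.Aut, h u = v) →
      ∃ t ∈ T.Aut, t * g * t⁻¹ = g' := by
  obtain ⟨g, hg, H⟩ := T.exists_isSphericallyTransitiveAt T.root
  rw [autStab_root] at hg
  refine ⟨⟨g, hg, (isSphericallyTransitiveAt_root_iff hg).1 H⟩, fun g hg g' hg' hgo hg'o => ?_⟩
  obtain ⟨t, ht, hconj⟩ := ((isSphericallyTransitiveAt_root_iff hg).2 hgo).exists_conj
    (autStab_root ▸ hg) ((isSphericallyTransitiveAt_root_iff hg').2 hg'o) (autStab_root ▸ hg')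
  refine ⟨t, autStab_root ▸ ht, mul_inv_eq_iff_eq_mul.2 (Equiv.ext fun x => ?_)⟩
  exact hconj x (mem_desc_root x)
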